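/- For all real numbers θ₀, θ_c with 0 < θ₀ < θ_c and every δ ∈ (0,1), the odd extension g̃^δ is differentiable at every point of ℝ and its derivative equals the even function h^δ; in particular h^δ is the second derivative of the regularized potential. -/

import Mathlib

open Real Set

/-- The singular logarithmic (Flory–Huggins) entropy term
`f₂(c) = (θ₀/2)((1+c)log(1+c) + (1−c)log(1−c))`. -/
noncomputable def f2 (θ₀ c : ℝ) : ℝ :=
  θ₀ / 2 * ((1 + c) * Real.log (1 + c) + (1 - c) * Real.log (1 - c))

/-- The regularized potential `f₂^δ` for nonnegative arguments. -/
noncomputable def f2deltaAux (θ₀ θc δ c : ℝ) : ℝ :=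
  if c ≤ 1 - δ then f2 θ₀ c
  else if c ≤ 1 then
    θ₀ / (2 * δ * (2 - δ)) * (c - 1 + δ) ^ 2
      + θ₀ / 2 * Real.log (2 / δ - 1) * (c - 1 + δ) + f2 θ₀ (1 - δ)
  else if c ≤ 1 + δ then
    (θc * δ * (2 - δ) - θ₀) / (6 * δ ^ 2 * (2 - δ)) * (c - 1) ^ 3
      + θ₀ / (2 * δ * (2 - δ)) * (c - 1) ^ 2
      + (θ₀ / (2 - δ) + θ₀ / 2 * Real.log ((2 - δ) / δ)) * (c - 1)
      + δ * θ₀ / (2 * (2 - δ)) + θ₀ * Real.log (2 - δ)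
  else
    θc / 2 * (c - 1 - δ) ^ 2
      + (θc * δ / 2 + 3 * θ₀ / (2 * (2 - δ)) + θ₀ / 2 * Real.log ((2 - δ) / δ))
          * (c - 1 - δ)
      + θc * δ ^ 2 / 6 + 11 * θ₀ * δ / (6 * (2 - δ))
      + θ₀ * δ / 2 * Real.log ((2 - δ) / δ) + θ₀ * Real.log (2 - δ)

/-- The regularized potential `f₂^δ`, extended to an even function on all of `ℝ`. -/
noncomputable def f2delta (θ₀ θc δ c : ℝ) : ℝ := f2deltaAux θ₀ θc δ |c|

/-- The explicit piecewise function `g^δ` (the derivative of `f₂^δ` for `c ≥ 0`). -/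
noncomputable def gdeltaAux (θ₀ θc δ c : ℝ) : ℝ :=
  if c ≤ 1 - δ then θ₀ / 2 * Real.log ((1 + c) / (1 - c))
  else if c ≤ 1 then θ₀ / (δ * (2 - δ)) * (c - 1 + δ) + θ₀ / 2 * Real.log ((2 - δ) / δ)
  else if c ≤ 1 + δ then
    (θc * δ * (2 - δ) - θ₀) / (2 * δ ^ 2 * (2 - δ)) * (c - 1) ^ 2
      + θ₀ / (δ * (2 - δ)) * (c - 1) + θ₀ / (2 - δ) + θ₀ / 2 * Real.log ((2 - δ) / δ)
  else θc * (c - 1 - δ) + θc * δ / 2 + 3 * θ₀ / (2 * (2 - δ))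
      + θ₀ / 2 * Real.log ((2 - δ) / δ)

/-- The odd extension `g̃^δ` of `g^δ` to all of `ℝ`. -/
noncomputable def gdelta (θ₀ θc δ c : ℝ) : ℝ :=
  if 0 ≤ c then gdeltaAux θ₀ θc δ c else -gdeltaAux θ₀ θc δ (-c)

/-- The explicit piecewise function `h^δ` (the second derivative of `f₂^δ`) for
positive arguments. -/
noncomputable def hdeltaAux (θ₀ θc δ c : ℝ) : ℝ :=
  if c ≤ 1 - δ then θ₀ / (1 - c ^ 2)
  else if c ≤ 1 then θ₀ / (δ * (2 - δ))
  else if c ≤ 1 + δ then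
    (θc * δ * (2 - δ) - θ₀) / (δ ^ 2 * (2 - δ)) * (c - 1) + θ₀ / (δ * (2 - δ))
  else θc

/-- The even function `h^δ` on `ℝ`, with `h^δ(0) = θ₀`. -/
noncomputable def hdelta (θ₀ θc δ c : ℝ) : ℝ :=
  if c = 0 then θ₀ else hdeltaAux θ₀ θc δ |c|

/-!
On `[0, ∞)` every piece of `f2deltaAux`, `gdeltaAux`, `hdeltaAux` is a polynomial or a logarithm,
and each piece of `f2deltaAux` (resp. `gdeltaAux`) is a primitive of the corresponding piece of
`gdeltaAux` (resp. `hdeltaAux`). At the breakpoints `1 - δ`, `1`, `1 + δ` adjacent pieces of all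
three functions take the same value, so a piecewise function is differentiable there with the
piecewise derivative (`hasDerivAt_ite_le`); the continuity of `gdeltaAux` is exactly what makes
the one-sided derivatives of `f2deltaAux` match. Near `0` only the logarithmic piece is involved,
and `gdeltaAux 0 = 0` lets the odd extension of `gdeltaAux` and the even extension of
`f2deltaAux` be differentiated across `0`.
-/

theorem hasDerivAt_of_eqOn_Iic_of_eqOn_Ici {f fl fr : ℝ → ℝ} {a d : ℝ}
    (hl : EqOn f fl (Iic a)) (hr : EqOn f fr (Ici a))
    (hfl : HasDerivAt fl d a) (hfr : HasDerivAt fr d a) : HasDerivAt f d a := by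
  have h := (hfl.hasDerivWithinAt.congr hl (hl self_mem_Iic)).union
    (hfr.hasDerivWithinAt.congr hr (hr self_mem_Ici))
  rwa [Iic_union_Ici, hasDerivWithinAt_univ] at h

theorem hasDerivAt_ite_le {f g f' g' : ℝ → ℝ} {a x : ℝ}
    (hfg : f a = g a) (hfg' : f' a = g' a)
    (hf : x ≤ a → HasDerivAt f (f' x) x) (hg : a ≤ x → HasDerivAt g (g' x) x) :
    HasDerivAt (fun y => if y ≤ a then f y else g y) (if x ≤ a then f' x else g' x) x := by
  rcases lt_trichotomy x a with hxa | rfl | hxa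
  · rw [if_pos hxa.le]
    refine (hf hxa.le).congr_of_eventuallyEq ?_
    filter_upwards [eventually_lt_nhds hxa] with y hy
    rw [if_pos hy.le]
  · rw [if_pos le_rfl]
    refine hasDerivAt_of_eqOn_Iic_of_eqOn_Ici (fun y hy => if_pos hy) (fun y hy => ?_)
      (hf le_rfl) (hfg' ▸ hg le_rfl)
    rcases (show x ≤ y from hy).eq_or_lt with rfl | hy
    · rw [if_pos le_rfl, hfg]
    · exact if_neg hy.not_ge
  · rw [if_neg hxa.not_ge]
    refine (hg hxa.le).congr_of_eventuallyEq ?_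
    filter_upwards [eventually_gt_nhds hxa] with y hy
    rw [if_neg hy.not_ge]

theorem hasDerivAt_odd_extension {f f' : ℝ → ℝ} {x : ℝ}
    (hf : ∀ y, 0 ≤ y → HasDerivAt f (f' y) y) (h0 : f 0 = 0) :
    HasDerivAt (fun y => if 0 ≤ y then f y else -f (-y)) (f' |x|) x := by
  have hneg : ∀ y ≤ 0, HasDerivAt (fun y => -f (-y)) (f' (-y)) y := fun y hy =>
    ((hf (-y) (by linarith)).comp y (hasDerivAt_neg' y)).neg.congr_deriv (by ring)
  rcases lt_trichotomy x 0 with hx | rfl | hx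
  · rw [abs_of_neg hx]
    refine (hneg x hx.le).congr_of_eventuallyEq ?_
    filter_upwards [eventually_lt_nhds hx] with y hy
    rw [if_neg hy.not_ge]
  · rw [abs_zero]
    refine hasDerivAt_of_eqOn_Iic_of_eqOn_Ici (fun y hy => ?_) (fun y hy => if_pos hy)
      (by simpa using hneg 0 le_rfl) (hf 0 le_rfl)
    rcases (show y ≤ 0 from hy).eq_or_lt with rfl | hy
    · simp [h0]
    · exact if_neg hy.not_ge
  · rw [abs_of_pos hx]
    refine (hf x hx.le).congr_of_eventuallyEq ?_
    filter_upwards [eventually_gt_nhds hx] with y hy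
    rw [if_pos hy.le]

theorem hasDerivAt_comp_abs {f f' : ℝ → ℝ} {x : ℝ}
    (hf : ∀ y, 0 ≤ y → HasDerivAt f (f' y) y) (h0 : f' 0 = 0) :
    HasDerivAt (fun y => f |y|) (if 0 ≤ x then f' x else -f' (-x)) x := by
  have hneg : ∀ y ≤ 0, HasDerivAt (fun y => f (-y)) (-f' (-y)) y := fun y hy =>
    ((hf (-y) (by linarith)).comp y (hasDerivAt_neg' y)).congr_deriv (by ring)
  rcases lt_trichotomy x 0 with hx | rfl | hx
  · rw [if_neg hx.not_ge]
    refine (hneg x hx.le).congr_of_eventuallyEq ?_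
    filter_upwards [eventually_lt_nhds hx] with y hy
    rw [abs_of_neg hy]
  · rw [if_pos le_rfl]
    exact hasDerivAt_of_eqOn_Iic_of_eqOn_Ici (fl := fun y => f (-y))
      (fun y hy => by simp [abs_of_nonpos (show y ≤ 0 from hy)])
      (fun y hy => by simp [abs_of_nonneg (show 0 ≤ y from hy)])
      (by simpa [h0] using hneg 0 le_rfl) (hf 0 le_rfl)
  · rw [if_pos hx.le]
    refine (hf x hx.le).congr_of_eventuallyEq ?_
    filter_upwards [eventually_gt_nhds hx] with y hy
    rw [abs_of_pos hy]

theorem hasDerivAt_cubic (a b c d x₀ x : ℝ) :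
    HasDerivAt (fun y => a * (y - x₀) ^ 3 + b * (y - x₀) ^ 2 + c * (y - x₀) + d)
      (3 * a * (x - x₀) ^ 2 + 2 * b * (x - x₀) + c) x := by
  have h := (hasDerivAt_id' x).sub_const x₀
  refine (((((h.pow 3).const_mul a).add ((h.pow 2).const_mul b)).add
    (h.const_mul c)).add_const d).congr_deriv ?_
  push_cast
  ring

theorem hasDerivAt_log_one_add_div_one_sub {x : ℝ} (hx : x ∈ Ioo (-1 : ℝ) 1) :
    HasDerivAt (fun y => log ((1 + y) / (1 - y))) (2 / (1 - x ^ 2)) x := by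
  obtain ⟨h1, h2⟩ : 0 < 1 + x ∧ 0 < 1 - x := ⟨by linarith [hx.1], by linarith [hx.2]⟩
  have hq : HasDerivAt (fun y => (1 + y) / (1 - y)) (2 / (1 - x) ^ 2) x := by
    refine (((hasDerivAt_id' x).const_add 1).div ((hasDerivAt_id' x).const_sub 1)
      h2.ne').congr_deriv ?_
    ring
  have h3 : 1 - x ^ 2 ≠ 0 := by nlinarith
  refine (hq.log (div_pos h1 h2).ne').congr_deriv ?_
  field_simp
  ring

theorem hasDerivAt_f2 (θ₀ : ℝ) {x : ℝ} (hx : x ∈ Ioo (-1 : ℝ) 1) :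
    HasDerivAt (f2 θ₀) (θ₀ / 2 * log ((1 + x) / (1 - x))) x := by
  obtain ⟨h1, h2⟩ : 0 < 1 + x ∧ 0 < 1 - x := ⟨by linarith [hx.1], by linarith [hx.2]⟩
  have hu : HasDerivAt (fun y => 1 + y) 1 x := (hasDerivAt_id x).const_add 1
  have hv : HasDerivAt (fun y => 1 - y) (-1) x := by
    simpa using (hasDerivAt_id x).const_sub 1
  refine (((hu.mul (hu.log h1.ne')).add (hv.mul (hv.log h2.ne'))).const_mul
    (θ₀ / 2)).congr_deriv ?_
  rw [log_div h1.ne' h2.ne']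
  field_simp
  ring

section Regularization

variable {θ₀ θc δ : ℝ}

theorem gdeltaAux_zero (hδ : δ ≤ 1) : gdeltaAux θ₀ θc δ 0 = 0 := by
  simp [gdeltaAux, hδ]

theorem hdelta_eq_hdeltaAux_abs (hδ : δ ≤ 1) (x : ℝ) :
    hdelta θ₀ θc δ x = hdeltaAux θ₀ θc δ |x| := by
  rcases eq_or_ne x 0 with rfl | hx
  · simp [hdelta, hdeltaAux, hδ]
  · rw [hdelta, if_neg hx]

theorem hasDerivAt_gdeltaAux (hδ : δ ∈ Ioo (0 : ℝ) 1) {x : ℝ} (hx : -1 < x) :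
    HasDerivAt (gdeltaAux θ₀ θc δ) (hdeltaAux θ₀ θc δ x) x := by
  obtain ⟨hδ0, hδ1⟩ := hδ
  have hδ2 : 2 - δ ≠ 0 := by linarith
  unfold gdeltaAux hdeltaAux
  apply hasDerivAt_ite_le
  · rw [if_pos (by linarith), show (1 + (1 - δ)) / (1 - (1 - δ)) = (2 - δ) / δ by ring]
    ring
  · rw [if_pos (by linarith), show 1 - (1 - δ) ^ 2 = δ * (2 - δ) by ring]
  · intro hx'
    refine ((hasDerivAt_log_one_add_div_one_sub ⟨hx, by linarith⟩).const_mul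
      (θ₀ / 2)).congr_deriv ?_
    ring
  intro _
  apply hasDerivAt_ite_le
  · rw [if_pos (by linarith)]
    field_simp
    ring
  · rw [if_pos (by linarith)]
    ring
  · intro _
    convert hasDerivAt_cubic 0 0 (θ₀ / (δ * (2 - δ))) (θ₀ / 2 * log ((2 - δ) / δ))
      (1 - δ) x using 1 <;> [(ext; ring); ring]
  intro _
  apply hasDerivAt_ite_le
  · field_simp
    ring
  · field_simp
    ring
  · intro _
    convert hasDerivAt_cubic 0 ((θc * δ * (2 - δ) - θ₀) / (2 * δ ^ 2 * (2 - δ)))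
      (θ₀ / (δ * (2 - δ))) (θ₀ / (2 - δ) + θ₀ / 2 * log ((2 - δ) / δ)) 1 x
      using 1 <;> [(ext; ring); (field_simp; ring)]
  · intro _
    convert hasDerivAt_cubic 0 0 θc (θc * δ / 2 + 3 * θ₀ / (2 * (2 - δ))
      + θ₀ / 2 * log ((2 - δ) / δ)) (1 + δ) x using 1 <;> [(ext; ring); ring]

theorem hasDerivAt_f2deltaAux (hδ : δ ∈ Ioo (0 : ℝ) 1) {x : ℝ} (hx : -1 < x) :
    HasDerivAt (f2deltaAux θ₀ θc δ) (gdeltaAux θ₀ θc δ x) x := by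
  obtain ⟨hδ0, hδ1⟩ := hδ
  have hδ2 : 2 - δ ≠ 0 := by linarith
  unfold f2deltaAux gdeltaAux
  simp only [show 2 / δ - 1 = (2 - δ) / δ by field_simp]
  apply hasDerivAt_ite_le
  · rw [if_pos (by linarith)]
    ring
  · rw [if_pos (by linarith), show (1 + (1 - δ)) / (1 - (1 - δ)) = (2 - δ) / δ by ring]
    ring
  · exact fun _ => hasDerivAt_f2 θ₀ ⟨hx, by linarith⟩
  intro _
  apply hasDerivAt_ite_le
  · rw [if_pos (by linarith), f2, log_div hδ2 hδ0.ne', show 1 + (1 - δ) = 2 - δ by ring,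
      show 1 - (1 - δ) = δ by ring]
    field_simp
    ring
  · rw [if_pos (by linarith)]
    field_simp
    ring
  · intro _
    convert hasDerivAt_cubic 0 (θ₀ / (2 * δ * (2 - δ))) (θ₀ / 2 * log ((2 - δ) / δ))
      (f2 θ₀ (1 - δ)) (1 - δ) x using 1 <;> [(ext; ring); (field_simp; ring)]
  intro _
  apply hasDerivAt_ite_le
  · field_simp
    ring
  · field_simp
    ring
  · intro _
    convert hasDerivAt_cubic ((θc * δ * (2 - δ) - θ₀) / (6 * δ ^ 2 * (2 - δ)))
      (θ₀ / (2 * δ * (2 - δ))) (θ₀ / (2 - δ) + θ₀ / 2 * log ((2 - δ) / δ))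
      (δ * θ₀ / (2 * (2 - δ)) + θ₀ * log (2 - δ)) 1 x
      using 1 <;> [(ext; ring); (field_simp; ring)]
  · intro _
    convert hasDerivAt_cubic 0 (θc / 2)
      (θc * δ / 2 + 3 * θ₀ / (2 * (2 - δ)) + θ₀ / 2 * log ((2 - δ) / δ))
      (θc * δ ^ 2 / 6 + 11 * θ₀ * δ / (6 * (2 - δ)) + θ₀ * δ / 2 * log ((2 - δ) / δ)
        + θ₀ * log (2 - δ)) (1 + δ) x using 1 <;> [(ext; ring); ring]

end Regularization

theorem gdelta_hasDeriv_general (θ₀ θc δ : ℝ) (hδ : δ ∈ Set.Ioo (0:ℝ) 1) :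
    (∀ c : ℝ, DifferentiableAt ℝ (gdelta θ₀ θc δ) c) ∧
      (∀ c : ℝ, deriv (gdelta θ₀ θc δ) c = hdelta θ₀ θc δ c) ∧
      (∀ c : ℝ, deriv (deriv (f2delta θ₀ θc δ)) c = hdelta θ₀ θc δ c) := by
  have hg : ∀ c, HasDerivAt (gdelta θ₀ θc δ) (hdelta θ₀ θc δ c) c := fun c => by
    rw [hdelta_eq_hdeltaAux_abs hδ.2.le]
    exact hasDerivAt_odd_extension (fun y hy => hasDerivAt_gdeltaAux hδ (by linarith))
      (gdeltaAux_zero hδ.2.le)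
  have hf : ∀ c, HasDerivAt (f2delta θ₀ θc δ) (gdelta θ₀ θc δ c) c := fun c =>
    hasDerivAt_comp_abs (fun y hy => hasDerivAt_f2deltaAux hδ (by linarith))
      (gdeltaAux_zero hδ.2.le)
  have hderiv : deriv (f2delta θ₀ θc δ) = gdelta θ₀ θc δ := funext fun c => (hf c).deriv
  exact ⟨fun c => (hg c).differentiableAt, fun c => (hg c).deriv,
    fun c => hderiv ▸ (hg c).deriv⟩

/-- the odd extension `g̃^δ` is differentiable at every point of `ℝ`
and its derivative equals the even function `h^δ`; in particular `h^δ` is the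
second derivative of the regularized potential `f₂^δ`. -/
theorem gdelta_hasDeriv (θ₀ θc δ : ℝ) (hθ₀ : 0 < θ₀) (hθ : θ₀ < θc)
    (hδ : δ ∈ Set.Ioo (0:ℝ) 1) :
    (∀ c : ℝ, DifferentiableAt ℝ (gdelta θ₀ θc δ) c) ∧
      (∀ c : ℝ, deriv (gdelta θ₀ θc δ) c = hdelta θ₀ θc δ c) ∧
      (∀ c : ℝ, deriv (deriv (f2delta θ₀ θc δ)) c = hdelta θ₀ θc δ c) :=
  gdelta_hasDeriv_general θ₀ θc δ hδ
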